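/- For finite random variables U, W, Y, V with V a function of (W,Y) and with (U,W) → X → Y a Markov chain: H(U|W) ≤ H(U) - I(U;V) + I(X;Y). -/
import Mathlib


open MeasureTheory ProbabilityTheory Real

/-- Shannon entropy (in bits) of a finite-valued random variable. -/
noncomputable def ent {Ω S : Type*} [MeasurableSpace Ω] [Fintype S]
    (μ : Measure Ω) (X : Ω → S) : ℝ :=
  ∑ s : S, -((μ (X ⁻¹' {s})).toReal * Real.logb 2 (μ (X ⁻¹' {s})).toReal)

/-- Conditional Shannon entropy H(X|Y) = H(X,Y) - H(Y). -/
noncomputable def condEnt {Ω S T : Type*} [MeasurableSpace Ω] [Fintype S] [Fintype T]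
    (μ : Measure Ω) (X : Ω → S) (Y : Ω → T) : ℝ :=
  ent μ (fun ω => (X ω, Y ω)) - ent μ Y

/-- Mutual information I(X;Y) = H(X) + H(Y) - H(X,Y). -/
noncomputable def mutInf {Ω S T : Type*} [MeasurableSpace Ω] [Fintype S] [Fintype T]
    (μ : Measure Ω) (X : Ω → S) (Y : Ω → T) : ℝ :=
  ent μ X + ent μ Y - ent μ (fun ω => (X ω, Y ω))

/-- Conditional mutual information I(X;Y|Z) = H(X|Z) - H(X|Y,Z). -/
noncomputable def condMutInf {Ω S T R : Type*} [MeasurableSpace Ω] [Fintype S] [Fintype T]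
    [Fintype R] (μ : Measure Ω) (X : Ω → S) (Y : Ω → T) (Z : Ω → R) : ℝ :=
  condEnt μ X Z - condEnt μ X (fun ω => (Y ω, Z ω))

/-- `Y` is conditionally independent of `Z` given `X` (elementwise form). -/
def CondIndepGiven {Ω A B C : Type*} [MeasurableSpace Ω]
    (μ : Measure Ω) (Y : Ω → A) (Z : Ω → B) (X : Ω → C) : Prop :=
  ∀ (a : A) (b : B) (c : C),
    μ {ω | Y ω = a ∧ Z ω = b ∧ X ω = c} * μ {ω | X ω = c} =
      μ {ω | Y ω = a ∧ X ω = c} * μ {ω | Z ω = b ∧ X ω = c}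

private lemma pre_sum {Ω S T : Type*} [MeasurableSpace Ω] [Fintype S]
    [MeasurableSpace S] [MeasurableSingletonClass S] [DecidableEq T]
    (μ : Measure Ω) [IsFiniteMeasure μ] (g : S → T) (Z : Ω → S) (hZ : Measurable Z) (t : T) :
    (μ ((fun ω => g (Z ω)) ⁻¹' {t})).toReal
      = ∑ s ∈ Finset.univ.filter (fun s => g s = t), (μ (Z ⁻¹' {s})).toReal := by
  rw [← ENNReal.toReal_sum (fun a _ => measure_ne_top μ _)]
  congr 1
  rw [MeasureTheory.sum_measure_preimage_singleton _
    (fun y _ => hZ (measurableSet_singleton y))]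
  congr 1
  ext ω
  simp

private lemma sum_p_one {Ω S : Type*} [MeasurableSpace Ω] [Fintype S]
    [MeasurableSpace S] [MeasurableSingletonClass S]
    (μ : Measure Ω) [IsProbabilityMeasure μ] (Z : Ω → S) (hZ : Measurable Z) :
    ∑ s : S, (μ (Z ⁻¹' {s})).toReal = 1 := by
  rw [← ENNReal.toReal_sum (fun a _ => measure_ne_top μ _)]
  rw [MeasureTheory.sum_measure_preimage_singleton _
    (fun y _ => hZ (measurableSet_singleton y))]
  simp

private lemma marg_pair {Ω A C : Type*} [MeasurableSpace Ω]
    [Fintype A] [MeasurableSpace A] [MeasurableSingletonClass A]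
    [MeasurableSpace C] [MeasurableSingletonClass C]
    (μ : Measure Ω) [IsFiniteMeasure μ]
    (P : Ω → A) (R : Ω → C) (hP : Measurable P) (hR : Measurable R) (c : C) :
    ∑ a : A, (μ ((fun ω => (P ω, R ω)) ⁻¹' {(a, c)})).toReal = (μ (R ⁻¹' {c})).toReal := by
  classical
  rw [← ENNReal.toReal_sum (fun a _ => measure_ne_top μ _)]
  congr 1
  have h1 : ∑ a : A, μ ((fun ω => (P ω, R ω)) ⁻¹' {(a, c)})
      = ∑ y ∈ Finset.univ.image (fun a : A => (a, c)), μ ((fun ω => (P ω, R ω)) ⁻¹' {y}) :=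
    (Finset.sum_image (f := fun y : A × C => μ ((fun ω => (P ω, R ω)) ⁻¹' {y}))
      (g := fun a : A => (a, c)) (fun x _ y _ h => by simpa using h)).symm
  rw [h1, MeasureTheory.sum_measure_preimage_singleton _
    (fun y _ => (hP.prodMk hR) (measurableSet_singleton y))]
  congr 1
  ext ω
  simp [Prod.ext_iff, eq_comm]

private lemma gibbs {ι : Type*} [Fintype ι] (p q : ι → ℝ)
    (hp : ∀ i, 0 ≤ p i) (hq : ∀ i, 0 ≤ q i) (hpq : ∀ i, q i = 0 → p i = 0)
    (hsum : ∑ i, q i ≤ ∑ i, p i) :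
    ∑ i, -(p i * Real.logb 2 (p i)) ≤ ∑ i, -(p i * Real.logb 2 (q i)) := by
  have h2 : (0:ℝ) < Real.log 2 := Real.log_pos one_lt_two
  have main : ∑ i, (p i * Real.log (q i) - p i * Real.log (p i)) ≤ 0 := by
    calc ∑ i, (p i * Real.log (q i) - p i * Real.log (p i))
        ≤ ∑ i, (q i - p i) := by
          apply Finset.sum_le_sum
          intro i _
          rcases eq_or_lt_of_le (hp i) with h0 | h0
          · simp only [← h0, zero_mul, sub_zero, sub_self]
            simpa using hq i
          · have hqpos : 0 < q i := by
              rcases eq_or_lt_of_le (hq i) with hq0 | hq0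
              · exact absurd (hpq i hq0.symm) (by linarith)
              · exact hq0
            have hlog := Real.log_le_sub_one_of_pos (div_pos hqpos h0)
            rw [Real.log_div (ne_of_gt hqpos) (ne_of_gt h0)] at hlog
            have hmul := mul_le_mul_of_nonneg_left hlog (le_of_lt h0)
            have hid : p i * (q i / p i - 1) = q i - p i := by
              field_simp
            nlinarith [hmul, hid]
      _ ≤ 0 := by
          rw [Finset.sum_sub_distrib]
          linarith
  have hrw : ∑ i, (-(p i * Real.logb 2 (p i)) - -(p i * Real.logb 2 (q i)))
      = (∑ i, (p i * Real.log (q i) - p i * Real.log (p i))) * (Real.log 2)⁻¹ := by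
    rw [Finset.sum_mul]
    apply Finset.sum_congr rfl
    intro i _
    simp only [Real.logb]
    field_simp
    ring
  have hfin : ∑ i, (-(p i * Real.logb 2 (p i)) - -(p i * Real.logb 2 (q i))) ≤ 0 := by
    rw [hrw]
    exact mul_nonpos_of_nonpos_of_nonneg main (inv_nonneg.mpr h2.le)
  rw [Finset.sum_sub_distrib] at hfin
  linarith

private lemma ent_comp_eq_sum {Ω S T : Type*} [MeasurableSpace Ω] [Fintype S] [Fintype T]
    [MeasurableSpace S] [MeasurableSingletonClass S]
    (μ : Measure Ω) [IsFiniteMeasure μ] (g : S → T) (Z : Ω → S) (hZ : Measurable Z) :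
    ent μ (fun ω => g (Z ω)) =
      ∑ s : S, -((μ (Z ⁻¹' {s})).toReal *
        Real.logb 2 ((μ ((fun ω => g (Z ω)) ⁻¹' {g s})).toReal)) := by
  classical
  unfold ent
  rw [← Finset.sum_fiberwise_of_maps_to (g := g) (fun s _ => Finset.mem_univ (g s))]
  apply Finset.sum_congr rfl
  intro t _
  have hfil : ∀ s ∈ Finset.univ.filter (fun s => g s = t),
      -((μ (Z ⁻¹' {s})).toReal *
        Real.logb 2 ((μ ((fun ω => g (Z ω)) ⁻¹' {g s})).toReal))
      = -((μ (Z ⁻¹' {s})).toReal *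
        Real.logb 2 ((μ ((fun ω => g (Z ω)) ⁻¹' {t})).toReal)) := by
    intro s hs
    rw [(Finset.mem_filter.mp hs).2]
  rw [Finset.sum_congr rfl hfil, Finset.sum_neg_distrib, ← Finset.sum_mul,
    ← pre_sum μ g Z hZ t]

private lemma ent_comp_inj {Ω S T : Type*} [MeasurableSpace Ω] [Fintype S] [Fintype T]
    (μ : Measure Ω) (g : S → T) (hg : Function.Injective g) (Z : Ω → S) :
    ent μ (fun ω => g (Z ω)) = ent μ Z := by
  classical
  symm
  unfold ent
  calc ∑ s : S, -((μ (Z ⁻¹' {s})).toReal * Real.logb 2 (μ (Z ⁻¹' {s})).toReal)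
      = ∑ s : S, -((μ ((fun ω => g (Z ω)) ⁻¹' {g s})).toReal *
          Real.logb 2 (μ ((fun ω => g (Z ω)) ⁻¹' {g s})).toReal) := by
        apply Finset.sum_congr rfl
        intro s _
        have : (fun ω => g (Z ω)) ⁻¹' {g s} = Z ⁻¹' {s} := by
          ext ω; simp [hg.eq_iff]
        rw [this]
    _ = ∑ t ∈ Finset.univ.image g, -((μ ((fun ω => g (Z ω)) ⁻¹' {t})).toReal *
          Real.logb 2 (μ ((fun ω => g (Z ω)) ⁻¹' {t})).toReal) := by
        rw [Finset.sum_image (fun x _ y _ h => hg h)]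
    _ = ∑ t : T, -((μ ((fun ω => g (Z ω)) ⁻¹' {t})).toReal *
          Real.logb 2 (μ ((fun ω => g (Z ω)) ⁻¹' {t})).toReal) := by
        apply Finset.sum_subset (Finset.subset_univ _)
        intro t _ ht
        have : (fun ω => g (Z ω)) ⁻¹' {t} = ∅ := by
          ext ω
          simp only [Set.mem_preimage, Set.mem_singleton_iff, Set.mem_empty_iff_false,
            iff_false]
          intro hh
          exact ht (by simpa using ⟨Z ω, hh⟩)
        simp [this]

private lemma ssa {Ω A B C : Type*} [MeasurableSpace Ω]
    [Fintype A] [MeasurableSpace A] [MeasurableSingletonClass A]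
    [Fintype B] [MeasurableSpace B] [MeasurableSingletonClass B]
    [Fintype C] [MeasurableSpace C] [MeasurableSingletonClass C]
    (μ : Measure Ω) [IsProbabilityMeasure μ]
    (P : Ω → A) (Q : Ω → B) (R : Ω → C)
    (hP : Measurable P) (hQ : Measurable Q) (hR : Measurable R) :
    ent μ (fun ω => (P ω, Q ω, R ω)) + ent μ R ≤
      ent μ (fun ω => (P ω, R ω)) + ent μ (fun ω => (Q ω, R ω)) := by
  classical
  have hTm : Measurable (fun ω => (P ω, Q ω, R ω)) := hP.prodMk (hQ.prodMk hR)
  set p : A × B × C → ℝ :=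
    fun x => (μ ((fun ω => (P ω, Q ω, R ω)) ⁻¹' {x})).toReal with hpdef
  set pac : A × C → ℝ := fun y => (μ ((fun ω => (P ω, R ω)) ⁻¹' {y})).toReal with hpacdef
  set pbc : B × C → ℝ := fun y => (μ ((fun ω => (Q ω, R ω)) ⁻¹' {y})).toReal with hpbcdef
  set pc : C → ℝ := fun c => (μ (R ⁻¹' {c})).toReal with hpcdef
  have hp0 : ∀ x, 0 ≤ p x := fun x => ENNReal.toReal_nonneg
  have hpac0 : ∀ y, 0 ≤ pac y := fun y => ENNReal.toReal_nonneg
  have hpbc0 : ∀ y, 0 ≤ pbc y := fun y => ENNReal.toReal_nonneg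
  have hpc0 : ∀ c, 0 ≤ pc c := fun c => ENNReal.toReal_nonneg
  -- monotonicity facts
  have hmac : ∀ x : A × B × C, p x ≤ pac (x.1, x.2.2) := by
    intro x
    apply ENNReal.toReal_mono (measure_ne_top μ _)
    apply measure_mono
    intro ω hω
    simp only [Set.mem_preimage, Set.mem_singleton_iff, Prod.ext_iff] at hω ⊢
    tauto
  have hmbc : ∀ x : A × B × C, p x ≤ pbc (x.2.1, x.2.2) := by
    intro x
    apply ENNReal.toReal_mono (measure_ne_top μ _)
    apply measure_mono
    intro ω hω
    simp only [Set.mem_preimage, Set.mem_singleton_iff, Prod.ext_iff] at hω ⊢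
    tauto
  have hmc : ∀ x : A × B × C, p x ≤ pc x.2.2 := by
    intro x
    apply ENNReal.toReal_mono (measure_ne_top μ _)
    apply measure_mono
    intro ω hω
    simp only [Set.mem_preimage, Set.mem_singleton_iff, Prod.ext_iff] at hω ⊢
    tauto
  -- the comparison pmf
  set q : A × B × C → ℝ := fun x => pac (x.1, x.2.2) * pbc (x.2.1, x.2.2) / pc x.2.2 with hqdef
  have hq0 : ∀ x, 0 ≤ q x :=
    fun x => div_nonneg (mul_nonneg (hpac0 _) (hpbc0 _)) (hpc0 _)
  have hpq : ∀ x, q x = 0 → p x = 0 := by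
    intro x hx
    by_cases hc : pc x.2.2 = 0
    · exact le_antisymm (hc ▸ hmc x) (hp0 x)
    · rw [hqdef] at hx
      simp only [div_eq_zero_iff, mul_eq_zero] at hx
      rcases hx with (h | h) | h
      · exact le_antisymm (h ▸ hmac x) (hp0 x)
      · exact le_antisymm (h ▸ hmbc x) (hp0 x)
      · exact absurd h hc
  have hmargA : ∀ c, ∑ a, pac (a, c) = pc c := fun c => marg_pair μ P R hP hR c
  have hmargB : ∀ c, ∑ b, pbc (b, c) = pc c := fun c => marg_pair μ Q R hQ hR c
  have hpsum : ∑ x, p x = 1 := sum_p_one μ _ hTm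
  have hcsum : ∑ c, pc c = 1 := sum_p_one μ R hR
  have hqsum : ∑ x, q x ≤ ∑ x, p x := by
    rw [hpsum]
    have hre : ∑ x : A × B × C, q x = ∑ c : C, ∑ a : A, ∑ b : B, q (a, b, c) := by
      rw [Fintype.sum_prod_type]
      have : ∀ a : A, ∑ y : B × C, q (a, y) = ∑ c : C, ∑ b : B, q (a, b, c) := by
        intro a
        rw [Fintype.sum_prod_type]
        exact Finset.sum_comm
      rw [Finset.sum_congr rfl (fun a _ => this a)]
      exact Finset.sum_comm
    rw [hre]
    calc ∑ c : C, ∑ a : A, ∑ b : B, q (a, b, c) ≤ ∑ c : C, pc c := by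
          apply Finset.sum_le_sum
          intro c _
          have hcc : ∑ a : A, ∑ b : B, q (a, b, c) = pc c * pc c / pc c := by
            calc ∑ a : A, ∑ b : B, q (a, b, c)
                = ∑ a : A, (pac (a, c) * (∑ b : B, pbc (b, c)) / pc c) := by
                  apply Finset.sum_congr rfl
                  intro a _
                  simp only [hqdef]
                  rw [← Finset.sum_div, ← Finset.mul_sum]
              _ = (∑ a : A, pac (a, c)) * (∑ b : B, pbc (b, c)) / pc c := by
                  rw [← Finset.sum_div, ← Finset.sum_mul]
              _ = pc c * pc c / pc c := by rw [hmargA, hmargB]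
          rw [hcc]
          by_cases hc : pc c = 0
          · simp [hc]
          · rw [mul_div_assoc, div_self hc, mul_one]
      _ = 1 := hcsum
  have hgibbs := gibbs p q hp0 hq0 hpq hqsum
  -- pullback identities
  have eC : ent μ R = ∑ x : A × B × C, -(p x * Real.logb 2 (pc x.2.2)) :=
    ent_comp_eq_sum μ (fun x : A × B × C => x.2.2) (fun ω => (P ω, Q ω, R ω)) hTm
  have eA : ent μ (fun ω => (P ω, R ω))
      = ∑ x : A × B × C, -(p x * Real.logb 2 (pac (x.1, x.2.2))) :=
    ent_comp_eq_sum μ (fun x : A × B × C => (x.1, x.2.2)) (fun ω => (P ω, Q ω, R ω)) hTm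
  have eB : ent μ (fun ω => (Q ω, R ω))
      = ∑ x : A × B × C, -(p x * Real.logb 2 (pbc (x.2.1, x.2.2))) :=
    ent_comp_eq_sum μ (fun x : A × B × C => x.2) (fun ω => (P ω, Q ω, R ω)) hTm
  have eT : ent μ (fun ω => (P ω, Q ω, R ω)) = ∑ x : A × B × C, -(p x * Real.logb 2 (p x)) :=
    rfl
  -- split the Gibbs RHS
  have hsplit : ∑ x : A × B × C, -(p x * Real.logb 2 (q x))
      = (∑ x : A × B × C, -(p x * Real.logb 2 (pac (x.1, x.2.2))))
        + (∑ x : A × B × C, -(p x * Real.logb 2 (pbc (x.2.1, x.2.2))))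
        - (∑ x : A × B × C, -(p x * Real.logb 2 (pc x.2.2))) := by
    rw [← Finset.sum_add_distrib, ← Finset.sum_sub_distrib]
    apply Finset.sum_congr rfl
    intro x _
    rcases eq_or_lt_of_le (hp0 x) with h0 | h0
    · simp [← h0]
    · have h1 : 0 < pac (x.1, x.2.2) := lt_of_lt_of_le h0 (hmac x)
      have h2 : 0 < pbc (x.2.1, x.2.2) := lt_of_lt_of_le h0 (hmbc x)
      have h3 : 0 < pc x.2.2 := lt_of_lt_of_le h0 (hmc x)
      rw [hqdef]
      simp only []
      rw [Real.logb_div (mul_ne_zero h1.ne' h2.ne') h3.ne', Real.logb_mul h1.ne' h2.ne']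
      ring
  rw [eT, eA, eB, eC]
  linarith [hgibbs, hsplit]

private lemma markov_ent {Ω E D G : Type*} [MeasurableSpace Ω]
    [Fintype E] [MeasurableSpace E] [MeasurableSingletonClass E]
    [Fintype D] [MeasurableSpace D] [MeasurableSingletonClass D]
    [Fintype G] [MeasurableSpace G] [MeasurableSingletonClass G]
    (μ : Measure Ω) [IsProbabilityMeasure μ]
    (Y : Ω → E) (Z : Ω → D) (X : Ω → G)
    (hY : Measurable Y) (hZ : Measurable Z) (hX : Measurable X)
    (h : CondIndepGiven μ Y Z X) :
    ent μ (fun ω => (Y ω, Z ω, X ω)) + ent μ X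
      = ent μ (fun ω => (Z ω, X ω)) + ent μ (fun ω => (Y ω, X ω)) := by
  classical
  have hTm : Measurable (fun ω => (Y ω, Z ω, X ω)) := hY.prodMk (hZ.prodMk hX)
  set p : E × D × G → ℝ :=
    fun x => (μ ((fun ω => (Y ω, Z ω, X ω)) ⁻¹' {x})).toReal with hpdef
  set pyx : E × G → ℝ := fun y => (μ ((fun ω => (Y ω, X ω)) ⁻¹' {y})).toReal with hpyxdef
  set pzx : D × G → ℝ := fun y => (μ ((fun ω => (Z ω, X ω)) ⁻¹' {y})).toReal with hpzxdef
  set px : G → ℝ := fun c => (μ (X ⁻¹' {c})).toReal with hpxdef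
  have hp0 : ∀ x, 0 ≤ p x := fun x => ENNReal.toReal_nonneg
  have hmyx : ∀ x : E × D × G, p x ≤ pyx (x.1, x.2.2) := by
    intro x
    apply ENNReal.toReal_mono (measure_ne_top μ _)
    apply measure_mono
    intro ω hω
    simp only [Set.mem_preimage, Set.mem_singleton_iff, Prod.ext_iff] at hω ⊢
    tauto
  have hmzx : ∀ x : E × D × G, p x ≤ pzx (x.2.1, x.2.2) := by
    intro x
    apply ENNReal.toReal_mono (measure_ne_top μ _)
    apply measure_mono
    intro ω hω
    simp only [Set.mem_preimage, Set.mem_singleton_iff, Prod.ext_iff] at hω ⊢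
    tauto
  have hmx : ∀ x : E × D × G, p x ≤ px x.2.2 := by
    intro x
    apply ENNReal.toReal_mono (measure_ne_top μ _)
    apply measure_mono
    intro ω hω
    simp only [Set.mem_preimage, Set.mem_singleton_iff, Prod.ext_iff] at hω ⊢
    tauto
  have hrel : ∀ x : E × D × G, p x * px x.2.2 = pyx (x.1, x.2.2) * pzx (x.2.1, x.2.2) := by
    intro x
    have hh := h x.1 x.2.1 x.2.2
    have s1 : {ω | Y ω = x.1 ∧ Z ω = x.2.1 ∧ X ω = x.2.2}
        = (fun ω => (Y ω, Z ω, X ω)) ⁻¹' {x} := by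
      ext ω; simp [Prod.ext_iff]
    have s2 : {ω | Y ω = x.1 ∧ X ω = x.2.2}
        = (fun ω => (Y ω, X ω)) ⁻¹' {(x.1, x.2.2)} := by
      ext ω; simp [Prod.ext_iff]
    have s3 : {ω | Z ω = x.2.1 ∧ X ω = x.2.2}
        = (fun ω => (Z ω, X ω)) ⁻¹' {(x.2.1, x.2.2)} := by
      ext ω; simp [Prod.ext_iff]
    have s4 : {ω | X ω = x.2.2} = X ⁻¹' {x.2.2} := by
      ext ω; simp
    rw [s1, s2, s3, s4] at hh
    have := congrArg ENNReal.toReal hh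
    rw [ENNReal.toReal_mul, ENNReal.toReal_mul] at this
    exact this
  have eX : ent μ X = ∑ x : E × D × G, -(p x * Real.logb 2 (px x.2.2)) :=
    ent_comp_eq_sum μ (fun x : E × D × G => x.2.2) (fun ω => (Y ω, Z ω, X ω)) hTm
  have eYX : ent μ (fun ω => (Y ω, X ω))
      = ∑ x : E × D × G, -(p x * Real.logb 2 (pyx (x.1, x.2.2))) :=
    ent_comp_eq_sum μ (fun x : E × D × G => (x.1, x.2.2)) (fun ω => (Y ω, Z ω, X ω)) hTm
  have eZX : ent μ (fun ω => (Z ω, X ω))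
      = ∑ x : E × D × G, -(p x * Real.logb 2 (pzx (x.2.1, x.2.2))) :=
    ent_comp_eq_sum μ (fun x : E × D × G => x.2) (fun ω => (Y ω, Z ω, X ω)) hTm
  have eT : ent μ (fun ω => (Y ω, Z ω, X ω))
      = ∑ x : E × D × G, -(p x * Real.logb 2 (p x)) := rfl
  rw [eT, eX, eYX, eZX, ← Finset.sum_add_distrib, ← Finset.sum_add_distrib]
  apply Finset.sum_congr rfl
  intro x _
  rcases eq_or_lt_of_le (hp0 x) with h0 | h0
  · simp [← h0]
  · have h1 : 0 < pyx (x.1, x.2.2) := lt_of_lt_of_le h0 (hmyx x)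
    have h2 : 0 < pzx (x.2.1, x.2.2) := lt_of_lt_of_le h0 (hmzx x)
    have h3 : 0 < px x.2.2 := lt_of_lt_of_le h0 (hmx x)
    have hl : Real.logb 2 (p x) + Real.logb 2 (px x.2.2)
        = Real.logb 2 (pyx (x.1, x.2.2)) + Real.logb 2 (pzx (x.2.1, x.2.2)) := by
      rw [← Real.logb_mul h0.ne' h3.ne', ← Real.logb_mul h1.ne' h2.ne', hrel x]
    linear_combination (-(p x)) * hl

private theorem converse_aux {Ω A B G E F : Type*} [MeasurableSpace Ω]
    [Fintype A] [MeasurableSpace A] [MeasurableSingletonClass A]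
    [Fintype B] [MeasurableSpace B] [MeasurableSingletonClass B]
    [Fintype G] [MeasurableSpace G] [MeasurableSingletonClass G]
    [Fintype E] [MeasurableSpace E] [MeasurableSingletonClass E]
    [Fintype F] [MeasurableSpace F] [MeasurableSingletonClass F]
    (μ : Measure Ω) [IsProbabilityMeasure μ]
    (U : Ω → A) (W : Ω → B) (X : Ω → G) (Y : Ω → E) (V : Ω → F)
    (hU : Measurable U) (hW : Measurable W) (hX : Measurable X) (hY : Measurable Y)
    (f : B × E → F) (hV : ∀ ω, V ω = f (W ω, Y ω))
    (hMarkov : CondIndepGiven μ Y (fun ω => (U ω, W ω)) X) :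
    (ent μ (fun ω => (U ω, W ω)) - ent μ W) ≤ ent μ U
      - (ent μ U + ent μ V - ent μ (fun ω => (U ω, V ω)))
      + (ent μ X + ent μ Y - ent μ (fun ω => (X ω, Y ω))) := by
  classical
  have hVf : V = fun ω => f (W ω, Y ω) := funext hV
  subst hVf
  have hVm : Measurable (fun ω => f (W ω, Y ω)) :=
    (measurable_of_countable f).comp (hW.prodMk hY)
  -- Step (a): data processing for V = f(W,Y)
  have ssa1 : ent μ (fun ω => ((W ω, Y ω), U ω, f (W ω, Y ω)))
        + ent μ (fun ω => f (W ω, Y ω))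
      ≤ ent μ (fun ω => ((W ω, Y ω), f (W ω, Y ω)))
        + ent μ (fun ω => (U ω, f (W ω, Y ω))) :=
    ssa μ _ _ _ (hW.prodMk hY) hU hVm
  have e1 : ent μ (fun ω => ((W ω, Y ω), U ω, f (W ω, Y ω)))
      = ent μ (fun ω => (U ω, W ω, Y ω)) :=
    ent_comp_inj μ (fun x : A × B × E => ((x.2.1, x.2.2), x.1, f (x.2.1, x.2.2)))
      (fun x y h => by simp only [Prod.ext_iff] at h ⊢; tauto) (fun ω => (U ω, W ω, Y ω))
  have e2 : ent μ (fun ω => ((W ω, Y ω), f (W ω, Y ω)))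
      = ent μ (fun ω => (W ω, Y ω)) :=
    ent_comp_inj μ (fun x : B × E => (x, f x))
      (fun x y h => by simp only [Prod.ext_iff] at h ⊢; tauto) (fun ω => (W ω, Y ω))
  rw [e1, e2] at ssa1
  -- Step (d) part 1: I(X;Y|U,W) ≥ 0
  have ssa2 : ent μ (fun ω => (X ω, Y ω, (U ω, W ω))) + ent μ (fun ω => (U ω, W ω))
      ≤ ent μ (fun ω => (X ω, (U ω, W ω))) + ent μ (fun ω => (Y ω, (U ω, W ω))) :=
    ssa μ _ _ _ hX hY (hU.prodMk hW)
  have e3 : ent μ (fun ω => (X ω, Y ω, (U ω, W ω)))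
      = ent μ (fun ω => (U ω, W ω, X ω, Y ω)) :=
    ent_comp_inj μ (fun x : A × B × G × E => (x.2.2.1, x.2.2.2, (x.1, x.2.1)))
      (fun x y h => by simp only [Prod.ext_iff] at h ⊢; tauto)
      (fun ω => (U ω, W ω, X ω, Y ω))
  have e4 : ent μ (fun ω => (X ω, (U ω, W ω))) = ent μ (fun ω => (U ω, W ω, X ω)) :=
    ent_comp_inj μ (fun x : A × B × G => (x.2.2, (x.1, x.2.1)))
      (fun x y h => by simp only [Prod.ext_iff] at h ⊢; tauto) (fun ω => (U ω, W ω, X ω))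
  have e5 : ent μ (fun ω => (Y ω, (U ω, W ω))) = ent μ (fun ω => (U ω, W ω, Y ω)) :=
    ent_comp_inj μ (fun x : A × B × E => (x.2.2, (x.1, x.2.1)))
      (fun x y h => by simp only [Prod.ext_iff] at h ⊢; tauto) (fun ω => (U ω, W ω, Y ω))
  rw [e3, e4, e5] at ssa2
  -- Step (c): subadditivity H(W,Y) ≤ H(W) + H(Y)
  have sub1 : ent μ (fun ω => (W ω, Y ω, ())) + ent μ (fun _ : Ω => ())
      ≤ ent μ (fun ω => (W ω, ())) + ent μ (fun ω => (Y ω, ())) :=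
    ssa μ _ _ _ hW hY measurable_const
  have e6 : ent μ (fun ω => (W ω, Y ω, ())) = ent μ (fun ω => (W ω, Y ω)) :=
    ent_comp_inj μ (fun x : B × E => (x.1, x.2, ()))
      (fun x y h => by simp only [Prod.ext_iff] at h ⊢; tauto) (fun ω => (W ω, Y ω))
  have e7 : ent μ (fun ω => (W ω, ())) = ent μ W :=
    ent_comp_inj μ (fun b : B => (b, ()))
      (fun x y h => by simp only [Prod.ext_iff] at h; tauto) W
  have e8 : ent μ (fun ω => (Y ω, ())) = ent μ Y :=
    ent_comp_inj μ (fun b : E => (b, ()))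
      (fun x y h => by simp only [Prod.ext_iff] at h; tauto) Y
  have e9 : ent μ (fun _ : Ω => ()) = 0 := by
    have hu : ((fun _ : Ω => ()) ⁻¹' {()}) = Set.univ := by ext ω; simp
    simp [ent, hu]
  rw [e6, e7, e8, e9] at sub1
  -- Step (d) part 2: Markov equality
  have mar : ent μ (fun ω => (Y ω, (U ω, W ω), X ω)) + ent μ X
      = ent μ (fun ω => ((U ω, W ω), X ω)) + ent μ (fun ω => (Y ω, X ω)) :=
    markov_ent μ Y (fun ω => (U ω, W ω)) X hY (hU.prodMk hW) hX hMarkov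
  have e10 : ent μ (fun ω => (Y ω, (U ω, W ω), X ω))
      = ent μ (fun ω => (U ω, W ω, X ω, Y ω)) :=
    ent_comp_inj μ (fun x : A × B × G × E => (x.2.2.2, (x.1, x.2.1), x.2.2.1))
      (fun x y h => by simp only [Prod.ext_iff] at h ⊢; tauto)
      (fun ω => (U ω, W ω, X ω, Y ω))
  have e11 : ent μ (fun ω => ((U ω, W ω), X ω)) = ent μ (fun ω => (U ω, W ω, X ω)) :=
    ent_comp_inj μ (fun x : A × B × G => ((x.1, x.2.1), x.2.2))
      (fun x y h => by simp only [Prod.ext_iff] at h ⊢; tauto) (fun ω => (U ω, W ω, X ω))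
  have e12 : ent μ (fun ω => (Y ω, X ω)) = ent μ (fun ω => (X ω, Y ω)) :=
    ent_comp_inj μ (fun x : G × E => (x.2, x.1))
      (fun x y h => by simp only [Prod.ext_iff] at h ⊢; tauto) (fun ω => (X ω, Y ω))
  rw [e10, e11, e12] at mar
  linarith [ssa1, ssa2, sub1, mar]

/-- Single-letter converse: V = f(W,Y) and (U,W) → X → Y Markov imply
H(U|W) ≤ H(U) - I(U;V) + I(X;Y). -/
theorem converse_single_letter {Ω A B G E F : Type*} [MeasurableSpace Ω]
    [Fintype A] [MeasurableSpace A] [MeasurableSingletonClass A]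
    [Fintype B] [MeasurableSpace B] [MeasurableSingletonClass B]
    [Fintype G] [MeasurableSpace G] [MeasurableSingletonClass G]
    [Fintype E] [MeasurableSpace E] [MeasurableSingletonClass E]
    [Fintype F] [MeasurableSpace F] [MeasurableSingletonClass F]
    (μ : Measure Ω) [IsProbabilityMeasure μ]
    (U : Ω → A) (W : Ω → B) (X : Ω → G) (Y : Ω → E) (V : Ω → F)
    (hU : Measurable U) (hW : Measurable W) (hX : Measurable X) (hY : Measurable Y)
    (f : B × E → F) (hV : ∀ ω, V ω = f (W ω, Y ω))
    (hMarkov : CondIndepGiven μ Y (fun ω => (U ω, W ω)) X) :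
    condEnt μ U W ≤ ent μ U - mutInf μ U V + mutInf μ X Y := by
  have h := converse_aux μ U W X Y V hU hW hX hY f hV hMarkov
  simp only [condEnt, mutInf]
  exact h
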